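/- Let R be a Noetherian local domain and I an ideal with μ(I) = 2 (minimally 2-generated) and grade 2. Then Ann(Ext^2_R(R/I, R)) = (I : I^{**}), where I^{**} = Hom(Hom(I,R),R) is the reflexive closure (viewed inside R). -/

import Mathlib

open CategoryTheory IsLocalRing

/-- `extModule R M N n` is the Ext module `Ext^n_R(M, N)`. -/
noncomputable def extModule (R : Type) [CommRing R] (M N : ModuleCat R) (n : ℕ) : ModuleCat R :=
  ((Ext R (ModuleCat R) n).obj (Opposite.op M)).obj N

/-- `extIdeal R I n` is `Ext^n_R(R/I, R)`. -/
noncomputable def extIdeal (R : Type) [CommRing R] (I : Ideal R) (n : ℕ) : ModuleCat R :=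
  extModule R (ModuleCat.of R (R ⧸ I)) (ModuleCat.of R R) n

/-- The grade of an ideal `I`: the least `n` with `Ext^n_R(R/I, R) ≠ 0`. -/
noncomputable def gradeIdeal (R : Type) [CommRing R] (I : Ideal R) : ℕ :=
  sInf {n | Nontrivial (extIdeal R I n)}

/-- The higher divisorial ideal `D(I) = Ann (Ext^g_R(R/I,R))`, `g = grade I`. -/
noncomputable def Dideal (R : Type) [CommRing R] (I : Ideal R) : Ideal R :=
  Module.annihilator R (extIdeal R I (gradeIdeal R I))

/-- The depth of a local ring: the grade of its maximal ideal. -/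
noncomputable def ringDepth (R : Type) [CommRing R] [IsLocalRing R] : ℕ :=
  gradeIdeal R (maximalIdeal R)

/-- A Noetherian local ring is Cohen–Macaulay if its depth equals its Krull dimension. -/
def IsCohenMacaulayLocal (R : Type) [CommRing R] [IsLocalRing R] : Prop :=
  (ringDepth R : WithBot ℕ∞) = ringKrullDim R

/-- The height of an ideal: the infimum of heights of primes containing it. -/
noncomputable def idealHeight (R : Type) [CommRing R] (I : Ideal R) : ℕ∞ :=
  ⨅ p : {p : PrimeSpectrum R // I ≤ p.asIdeal}, Order.height p.1

/-!
Resolve `R ⧸ (a, b)` projectively as `R ← R² ← P₂ ← ⋯` with `d₁ (x, y) = x a + y b`, so that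
`Ext²(R/I, R)` is the cokernel of `Hom(R², R) → Hom(Syz, R)`, `Syz = ker d₁ = im d₂`.
For `b ≠ 0`, `(x, y) ↦ x / b` identifies `Syz` with `I⁻¹ = (R : I)` inside the fraction field,
so a map `φ : Syz → R` is multiplication by `φ (b, -a) ∈ (R : I⁻¹) = I**`, and every element of
`I**` arises this way; the maps coming from `Hom(R², R)` are exactly those with `φ (b, -a) ∈ I`.
Hence `Ext²(R/I, R) ≅ I** / I`, whose annihilator is `(I : I**)`.
-/

universe u v

open Limits nonZeroDivisors

namespace CategoryTheory

variable {C : Type u} [Category.{v} C] [Abelian C] [EnoughProjectives C]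

lemma Projective.d_comp {X Y : C} (f : X ⟶ Y) : Projective.d f ≫ f = 0 :=
  (Category.assoc (Projective.π (kernel f)) (kernel.ι f) f).trans
    (by rw [kernel.condition, comp_zero]; rfl)

namespace ProjectiveResolution

noncomputable def presentationComplex (S : ShortComplex C) : ChainComplex C ℕ :=
  ChainComplex.mk' S.X₂ S.X₁ S.f (fun f => ⟨_, Projective.d f, Projective.d_comp f⟩)

lemma presentationComplex_d_one_zero (S : ShortComplex C) :
    (presentationComplex S).d 1 0 = S.f := by
  simp [presentationComplex]

lemma presentationComplex_exactAt_succ (S : ShortComplex C) (n : ℕ) :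
    (presentationComplex S).ExactAt (n + 1) := by
  rw [HomologicalComplex.exactAt_iff' _ (n + 1 + 1) (n + 1) n (by simp) (by simp)]
  refine (ShortComplex.exact_iff_of_iso (S₂ := ShortComplex.mk _ _
    (Projective.d_comp ((presentationComplex S).d (n + 1) n))) ?_).2 (exact_d_f _)
  exact ShortComplex.isoMk (ChainComplex.mk'XIso S.X₂ S.X₁ S.f
      (fun f => ⟨_, Projective.d f, Projective.d_comp f⟩) n) (Iso.refl _) (Iso.refl _)
    ((ChainComplex.mk'_d S.X₂ S.X₁ S.f
      (fun f => ⟨_, Projective.d f, Projective.d_comp f⟩) n).symm.trans (Category.comp_id _).symm)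
    ((Category.id_comp _).trans (Category.comp_id _).symm)

instance (S : ShortComplex C) [Projective S.X₁] [Projective S.X₂] (n : ℕ) :
    Projective ((presentationComplex S).X n) := by
  obtain (_ | _ | _ | n) := n
  · assumption
  · assumption
  · apply Projective.projective_over
  · apply Projective.projective_over

noncomputable def ofPresentation (S : ShortComplex C) (hS : S.Exact) [Epi S.g]
    [Projective S.X₁] [Projective S.X₂] : ProjectiveResolution S.X₃ where
  complex := presentationComplex S
  π := (ChainComplex.toSingle₀Equiv _ _).symm ⟨S.g, by
    rw [presentationComplex_d_one_zero]; exact S.zero⟩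
  quasiIso := ⟨fun n => by
    cases n with
    | zero =>
      rw [ChainComplex.quasiIsoAt₀_iff, ShortComplex.quasiIso_iff_of_zeros']
      · refine (ShortComplex.exact_and_epi_g_iff_of_iso (S₂ := S) ?_).2 ⟨hS, inferInstance⟩
        refine ShortComplex.isoMk (Iso.refl _) (Iso.refl _) (Iso.refl _) ?_ ?_
        · erw [Category.id_comp, Category.comp_id]
          exact (presentationComplex_d_one_zero S).symm
        · erw [Category.id_comp, Category.comp_id]
          exact (ChainComplex.toSingle₀Equiv_symm_apply_f_zero
            (C := presentationComplex S) S.g _).symm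
      all_goals rfl
    | succ n =>
      rw [quasiIsoAt_iff_exactAt']
      · apply presentationComplex_exactAt_succ
      · apply ChainComplex.exactAt_succ_single_obj⟩

lemma ofPresentation_complex_d_one_zero (S : ShortComplex C) (hS : S.Exact) [Epi S.g]
    [Projective S.X₁] [Projective S.X₂] : (ofPresentation S hS).complex.d 1 0 = S.f :=
  presentationComplex_d_one_zero S

end ProjectiveResolution

variable {R : Type u} [CommRing R]

lemma ShortComplex.mem_annihilator_moduleCatLeftHomologyData_H_iff
    (S : ShortComplex (ModuleCat.{u} R)) (r : R) :
    r ∈ Module.annihilator R S.moduleCatLeftHomologyData.H ↔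
      ∀ φ : S.X₂, S.g φ = 0 → ∃ α : S.X₁, S.f α = r • φ := by
  rw [Module.mem_annihilator]
  constructor
  · intro h φ hφ
    have hr := h (Submodule.Quotient.mk ⟨φ, hφ⟩)
    change r • (Submodule.Quotient.mk ⟨φ, hφ⟩ :
      LinearMap.ker S.g.hom ⧸ LinearMap.range S.moduleCatToCycles) = 0 at hr
    rw [← Submodule.Quotient.mk_smul, Submodule.Quotient.mk_eq_zero] at hr
    obtain ⟨α, hα⟩ := hr
    exact ⟨α, congrArg Subtype.val hα⟩
  · intro h m
    obtain ⟨⟨φ, hφ⟩, rfl⟩ := Submodule.Quotient.mk_surjective _ m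
    change r • (Submodule.Quotient.mk ⟨φ, hφ⟩ :
      LinearMap.ker S.g.hom ⧸ LinearMap.range S.moduleCatToCycles) = 0
    rw [← Submodule.Quotient.mk_smul, Submodule.Quotient.mk_eq_zero]
    obtain ⟨α, hα⟩ := h φ hφ
    exact ⟨α, Subtype.ext hα⟩

namespace ProjectiveResolution

variable {M N : ModuleCat.{u} R} (P : ProjectiveResolution M)

lemma range_d_eq_ker_d (n : ℕ) :
    LinearMap.range (P.complex.d (n + 2) (n + 1)).hom =
      LinearMap.ker (P.complex.d (n + 1) n).hom :=
  (ShortComplex.moduleCat_exact_iff_range_eq_ker _).1 (P.exact_succ n)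

/-- `Ext^{n+1}(M, N)` is `Hom(Ω, N)` modulo the maps extending to `P n`, where
`Ω = P (n + 1) ⧸ ker d` is the `(n+1)`-st syzygy of `M`. -/
lemma mem_annihilator_ext_succ_iff (n : ℕ) (r : R) :
    r ∈ Module.annihilator R (((Ext R (ModuleCat.{u} R) (n + 1)).obj (Opposite.op M)).obj N) ↔
      ∀ φ : P.complex.X (n + 1) →ₗ[R] N,
        LinearMap.ker (P.complex.d (n + 1) n).hom ≤ LinearMap.ker φ →
          ∃ α : P.complex.X n →ₗ[R] N, α ∘ₗ (P.complex.d (n + 1) n).hom = r • φ := by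
  let S := (P.complex.linearYonedaObj R N).sc' n (n + 1) (n + 2)
  let e := P.isoExt (n + 1) N ≪≫
    (P.complex.linearYonedaObj R N).homologyIsoSc' n (n + 1) (n + 2) (by simp) (by simp) ≪≫
    S.moduleCatHomologyIso
  rw [e.toLinearEquiv.annihilator_eq, S.mem_annihilator_moduleCatLeftHomologyData_H_iff]
  have hcycle (φ : P.complex.X (n + 1) ⟶ N) :
      S.g φ = 0 ↔ LinearMap.ker (P.complex.d (n + 1) n).hom ≤ LinearMap.ker φ.hom := by
    rw [← range_d_eq_ker_d, LinearMap.range_le_ker_iff]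
    exact ⟨congrArg ModuleCat.Hom.hom, ModuleCat.hom_ext⟩
  have hboundary (α : P.complex.X n ⟶ N) (φ : P.complex.X (n + 1) ⟶ N) :
      S.f α = r • φ ↔ α.hom ∘ₗ (P.complex.d (n + 1) n).hom = r • φ.hom :=
    ModuleCat.hom_ext_iff
  constructor
  · intro h φ hφ
    obtain ⟨α, hα⟩ := h (ModuleCat.ofHom φ) ((hcycle _).2 hφ)
    exact ⟨α.hom, (hboundary _ _).1 hα⟩
  · intro h φ hφ
    obtain ⟨α, hα⟩ := h φ.hom ((hcycle φ).1 hφ)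
    exact ⟨ModuleCat.ofHom α, (hboundary _ _).2 hα⟩

end ProjectiveResolution

end CategoryTheory

section

variable {R : Type*} [CommRing R]

def pairMap (a b : R) : (Fin 2 → R) →ₗ[R] R where
  toFun v := v 0 * a + v 1 * b
  map_add' v w := by simp only [Pi.add_apply]; ring
  map_smul' c v := by simp only [Pi.smul_apply, smul_eq_mul, RingHom.id_apply]; ring

@[simp]
lemma pairMap_apply (a b : R) (v : Fin 2 → R) : pairMap a b v = v 0 * a + v 1 * b := rfl

lemma range_pairMap (a b : R) : LinearMap.range (pairMap a b) = Ideal.span {a, b} := by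
  ext x
  simp only [LinearMap.mem_range, pairMap_apply, Ideal.mem_span_pair]
  exact ⟨fun ⟨v, hv⟩ => ⟨v 0, v 1, hv⟩, fun ⟨u, v, h⟩ => ⟨![u, v], by simpa using h⟩⟩

lemma span_pair_ne_bot {a b : R} (hb : b ≠ 0) : Ideal.span {a, b} ≠ ⊥ :=
  fun h => hb (Ideal.span_eq_bot.1 h b (by simp))

lemma smul_eq_smul_of_pairMap_eq_zero {a b : R} {v : Fin 2 → R} (hv : pairMap a b v = 0) :
    b • v = v 0 • ![b, -a] := by
  ext i
  fin_cases i
  · simp [mul_comm]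
  · simp only [pairMap_apply] at hv
    simp only [Fin.mk_one, Pi.smul_apply, smul_eq_mul, Matrix.cons_val_one,
      Matrix.cons_val_fin_one]
    linear_combination hv

lemma linearMap_apply_mem_span_pair (α : (Fin 2 → R) →ₗ[R] R) (a b : R) :
    α ![b, -a] ∈ Ideal.span {a, b} := by
  rw [LinearMap.pi_apply_eq_sum_univ, Fin.sum_univ_two, Ideal.mem_span_pair]
  exact ⟨-α (fun j => if 1 = j then 1 else 0), α (fun j => if 0 = j then 1 else 0), by
    simp only [Matrix.cons_val_zero, Matrix.cons_val_one, Matrix.cons_val_fin_one, smul_eq_mul]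
    ring⟩

lemma exists_algebraLinearMap_comp_eq {A M : Type*} [CommRing A] [Algebra R A]
    [AddCommGroup M] [Module R M] (h : Function.Injective (algebraMap R A)) (f : M →ₗ[R] A)
    (hf : ∀ p, f p ∈ LinearMap.range (Algebra.linearMap R A)) :
    ∃ g : M →ₗ[R] R, Algebra.linearMap R A ∘ₗ g = f :=
  ⟨(LinearEquiv.ofInjective (Algebra.linearMap R A) h).symm ∘ₗ f.codRestrict _ hf,
    LinearMap.ext fun p => congrArg Subtype.val
      ((LinearEquiv.ofInjective (Algebra.linearMap R A) h).apply_symm_apply ⟨f p, hf p⟩)⟩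

variable {P : Type*} [AddCommGroup P] [Module R P] {D : P →ₗ[R] (Fin 2 → R)} {a b : R} {p₁ : P}

lemma mul_apply_eq_of_ker_le {φ : P →ₗ[R] R} (hφ : LinearMap.ker D ≤ LinearMap.ker φ)
    (hp₁ : D p₁ = ![b, -a]) {p : P} (hp : pairMap a b (D p) = 0) :
    b * φ p = D p 0 * φ p₁ := by
  have hker : b • p - D p 0 • p₁ ∈ LinearMap.ker D := by
    rw [LinearMap.mem_ker, map_sub, map_smul, map_smul, hp₁, smul_eq_smul_of_pairMap_eq_zero hp,
      sub_self]
  simpa [sub_eq_zero] using hφ hker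

lemma exists_comp_eq_smul_iff [IsDomain R] (hb : b ≠ 0) (hD : ∀ p, pairMap a b (D p) = 0)
    (hp₁ : D p₁ = ![b, -a]) {φ : P →ₗ[R] R} (hφ : LinearMap.ker D ≤ LinearMap.ker φ) (r : R) :
    (∃ α : (Fin 2 → R) →ₗ[R] R, α ∘ₗ D = r • φ) ↔ r * φ p₁ ∈ Ideal.span {a, b} := by
  constructor
  · rintro ⟨α, hα⟩
    have hmem := linearMap_apply_mem_span_pair α a b
    rwa [← hp₁, ← LinearMap.comp_apply, hα] at hmem
  · intro h
    obtain ⟨s, t, hst⟩ := Ideal.mem_span_pair.1 h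
    refine ⟨pairMap t (-s), LinearMap.ext fun p => mul_left_cancel₀ hb ?_⟩
    have hp := hD p
    have hkey := mul_apply_eq_of_ker_le hφ hp₁ hp
    simp only [pairMap_apply] at hp
    simp only [LinearMap.comp_apply, pairMap_apply, LinearMap.smul_apply, smul_eq_mul]
    linear_combination (-s) * hp + (-r) * hkey + D p 0 * hst

end

namespace FractionalIdeal

variable {R K : Type*} [CommRing R] [Field K] [Algebra R K] [IsFractionRing R K]

lemma algebraMap_mem_coeIdeal_iff {I : Ideal R} {x : R} :
    algebraMap R K x ∈ (I : FractionalIdeal R⁰ K) ↔ x ∈ I := by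
  refine ⟨fun h => ?_, mem_coeIdeal_of_mem _⟩
  obtain ⟨y, hy, hyx⟩ := (mem_coeIdeal _).1 h
  rwa [← IsFractionRing.injective R K hyx]

variable [IsDomain R]

lemma one_div_coeIdeal_ne_zero {I : Ideal R} (hI : I ≠ ⊥) :
    1 / (I : FractionalIdeal R⁰ K) ≠ 0 := by
  have hle : 1 ≤ 1 / (I : FractionalIdeal R⁰ K) :=
    (le_div_iff_mul_le (coeIdeal_ne_zero.2 hI)).2 (by simpa using coeIdeal_le_one)
  intro h
  rw [h] at hle
  exact one_ne_zero (le_zero_iff.1 hle)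

end FractionalIdeal

section

variable {R : Type*} (K : Type*) [CommRing R] [Field K] [Algebra R K]

/-- On syzygies of `(a, b)`, this is the isomorphism onto `(R : (a, b))`. -/
def syzygyRatio (b : R) : (Fin 2 → R) →ₗ[R] K :=
  LinearMap.mulLeft R (algebraMap R K b)⁻¹ ∘ₗ Algebra.linearMap R K ∘ₗ LinearMap.proj 0

@[simp]
lemma syzygyRatio_apply (b : R) (v : Fin 2 → R) :
    syzygyRatio K b v = (algebraMap R K b)⁻¹ * algebraMap R K (v 0) := rfl

end

section

variable {R K : Type*} [CommRing R] [IsDomain R] [Field K] [Algebra R K] [IsFractionRing R K]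

open FractionalIdeal

local notation "J(" a ", " b ")" => ((Ideal.span {a, b} : Ideal R) : FractionalIdeal R⁰ K)

variable {a b : R}

lemma mem_one_div_span_pair_iff (hb : b ≠ 0) {m : K} :
    m ∈ 1 / J(a, b) ↔
      m * algebraMap R K a ∈ (1 : FractionalIdeal R⁰ K) ∧
        m * algebraMap R K b ∈ (1 : FractionalIdeal R⁰ K) := by
  rw [mem_div_iff_of_ne_zero (coeIdeal_ne_zero.2 (span_pair_ne_bot hb))]
  refine ⟨fun h => ⟨h _ (mem_coeIdeal_of_mem _ (Ideal.subset_span (by simp))),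
    h _ (mem_coeIdeal_of_mem _ (Ideal.subset_span (by simp)))⟩, ?_⟩
  rintro ⟨ha', hb'⟩ y hy
  obtain ⟨c, hc, rfl⟩ := (mem_coeIdeal _).1 hy
  obtain ⟨s, t, rfl⟩ := Ideal.mem_span_pair.1 hc
  obtain ⟨u, hu⟩ := (mem_one_iff _).1 ha'
  obtain ⟨v, hv⟩ := (mem_one_iff _).1 hb'
  refine (mem_one_iff _).2 ⟨s * u + t * v, ?_⟩
  simp only [map_add, map_mul, hu, hv]
  ring

lemma mem_one_div_one_div_span_pair_iff (hb : b ≠ 0) {x : K} :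
    x ∈ 1 / (1 / J(a, b)) ↔ ∀ m ∈ 1 / J(a, b), x * m ∈ (1 : FractionalIdeal R⁰ K) :=
  mem_div_iff_of_ne_zero (one_div_coeIdeal_ne_zero (span_pair_ne_bot hb))

lemma syzygyRatio_mem_one_div (hb : b ≠ 0) {v : Fin 2 → R} (hv : pairMap a b v = 0) :
    syzygyRatio K b v ∈ 1 / J(a, b) := by
  have hbK : algebraMap R K b ≠ 0 := (map_ne_zero_iff _ (IsFractionRing.injective R K)).2 hb
  rw [mem_one_div_span_pair_iff hb, mem_one_iff, mem_one_iff]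
  refine ⟨⟨-v 1, ?_⟩, ⟨v 0, ?_⟩⟩
  · rw [pairMap_apply, add_eq_zero_iff_eq_neg] at hv
    rw [syzygyRatio_apply, mul_assoc, ← map_mul, hv]
    field_simp
    simp only [map_neg, map_mul, neg_mul]
  · rw [syzygyRatio_apply, mul_right_comm, inv_mul_cancel₀ hbK, one_mul]

lemma exists_syzygyRatio_eq (hb : b ≠ 0) {m : K} (hm : m ∈ 1 / J(a, b)) :
    ∃ v, pairMap a b v = 0 ∧ syzygyRatio K b v = m := by
  have hbK : algebraMap R K b ≠ 0 := (map_ne_zero_iff _ (IsFractionRing.injective R K)).2 hb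
  obtain ⟨hma, hmb⟩ := (mem_one_div_span_pair_iff hb).1 hm
  obtain ⟨y, hy⟩ := (mem_one_iff _).1 hma
  obtain ⟨x, hx⟩ := (mem_one_iff _).1 hmb
  refine ⟨![x, -y], IsFractionRing.injective R K ?_, ?_⟩
  · simp only [pairMap_apply, Matrix.cons_val_zero, Matrix.cons_val_one, Matrix.cons_val_fin_one,
      map_add, map_mul, map_neg, map_zero, hx, hy]
    ring
  · rw [syzygyRatio_apply, Matrix.cons_val_zero, hx]
    field_simp

variable {P : Type*} [AddCommGroup P] [Module R P] {D : P →ₗ[R] (Fin 2 → R)} {p₁ : P}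

lemma algebraMap_apply_mem_one_div_one_div (hb : b ≠ 0)
    (hD : LinearMap.range D = LinearMap.ker (pairMap a b)) (hp₁ : D p₁ = ![b, -a])
    {φ : P →ₗ[R] R} (hφ : LinearMap.ker D ≤ LinearMap.ker φ) :
    algebraMap R K (φ p₁) ∈ 1 / (1 / J(a, b)) := by
  refine (mem_one_div_one_div_span_pair_iff hb).2 fun m hm => ?_
  obtain ⟨v, hv, rfl⟩ := exists_syzygyRatio_eq hb hm
  obtain ⟨p, rfl⟩ : v ∈ LinearMap.range D := hD ▸ hv
  have hbK : algebraMap R K b ≠ 0 := (map_ne_zero_iff _ (IsFractionRing.injective R K)).2 hb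
  have hkey := congrArg (algebraMap R K) (mul_apply_eq_of_ker_le hφ hp₁ hv)
  rw [map_mul, map_mul] at hkey
  refine (mem_one_iff _).2 ⟨φ p, ?_⟩
  rw [syzygyRatio_apply]
  field_simp
  linear_combination hkey

lemma exists_ker_le_algebraMap_apply_eq (hb : b ≠ 0) (hD : ∀ p, pairMap a b (D p) = 0)
    (hp₁ : D p₁ = ![b, -a]) {x : K} (hx : x ∈ 1 / (1 / J(a, b))) :
    ∃ φ : P →ₗ[R] R, LinearMap.ker D ≤ LinearMap.ker φ ∧ algebraMap R K (φ p₁) = x := by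
  have hbK : algebraMap R K b ≠ 0 := (map_ne_zero_iff _ (IsFractionRing.injective R K)).2 hb
  obtain ⟨φ, hφ⟩ := exists_algebraLinearMap_comp_eq (IsFractionRing.injective R K)
    (LinearMap.mulLeft R x ∘ₗ syzygyRatio K b ∘ₗ D) fun p =>
      (mem_one_iff _).1 ((mem_one_div_one_div_span_pair_iff hb).1 hx _
        (syzygyRatio_mem_one_div hb (hD p)))
  have hφ' (p : P) : algebraMap R K (φ p) = x * syzygyRatio K b (D p) :=
    LinearMap.congr_fun hφ p
  refine ⟨φ, fun p hp => ?_, ?_⟩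
  · rw [LinearMap.mem_ker] at hp ⊢
    apply IsFractionRing.injective R K
    rw [hφ', hp, map_zero, map_zero, mul_zero]
  · rw [hφ', hp₁, syzygyRatio_apply, Matrix.cons_val_zero, inv_mul_cancel₀ hbK, mul_one]

theorem forall_exists_comp_eq_smul_iff (hb : b ≠ 0)
    (hD : LinearMap.range D = LinearMap.ker (pairMap a b)) (r : R) :
    (∀ φ : P →ₗ[R] R, LinearMap.ker D ≤ LinearMap.ker φ →
        ∃ α : (Fin 2 → R) →ₗ[R] R, α ∘ₗ D = r • φ) ↔
      ∀ x ∈ 1 / (1 / J(a, b)), algebraMap R K r * x ∈ J(a, b) := by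
  have hDp (p : P) : pairMap a b (D p) = 0 := by
    rw [← LinearMap.mem_ker, ← hD]
    exact LinearMap.mem_range_self D p
  obtain ⟨p₁, hp₁⟩ : ![b, -a] ∈ LinearMap.range D := by
    rw [hD, LinearMap.mem_ker, pairMap_apply]
    simp only [Matrix.cons_val_zero, Matrix.cons_val_one]
    ring
  constructor
  · intro H x hx
    obtain ⟨φ, hφ, rfl⟩ := exists_ker_le_algebraMap_apply_eq hb hDp hp₁ hx
    rw [← map_mul, algebraMap_mem_coeIdeal_iff, ← exists_comp_eq_smul_iff hb hDp hp₁ hφ]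
    exact H φ hφ
  · intro H φ hφ
    rw [exists_comp_eq_smul_iff hb hDp hp₁ hφ, ← algebraMap_mem_coeIdeal_iff (K := K), map_mul]
    exact H _ (algebraMap_apply_mem_one_div_one_div hb hD hp₁ hφ)

end

section

variable {R : Type} [CommRing R]

open ModuleCat in
noncomputable def pairResolution (a b : R) :
    ProjectiveResolution (ModuleCat.of R (R ⧸ Ideal.span {a, b})) :=
  haveI : Epi (ofHom (Ideal.span {a, b}).mkQ) :=
    (ModuleCat.epi_iff_surjective _).2 (Ideal.span {a, b}).mkQ_surjective
  ProjectiveResolution.ofPresentation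
    (ShortComplex.mk (ofHom (pairMap a b)) (ofHom (Ideal.span {a, b}).mkQ)
      (hom_ext (LinearMap.ext fun v =>
        (Submodule.Quotient.mk_eq_zero _).2 (range_pairMap a b ▸ LinearMap.mem_range_self _ v))))
    ((ShortComplex.moduleCat_exact_iff_range_eq_ker _).2 (by simp [range_pairMap]))

lemma range_pairResolution_d_two_one (a b : R) :
    LinearMap.range (((pairResolution a b).complex.d 2 1).hom :
      (pairResolution a b).complex.X 2 →ₗ[R] (Fin 2 → R)) = LinearMap.ker (pairMap a b) := by
  rw [(pairResolution a b).range_d_eq_ker_d 0]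
  unfold pairResolution
  rw [ProjectiveResolution.ofPresentation_complex_d_one_zero]
  rfl

end

theorem stmt15_general (R : Type) [CommRing R] [IsDomain R]
    (I : Ideal R)
    (hgen : ∃ a b : R, I = Ideal.span {a, b})
    (hmin : ∀ a : R, I ≠ Ideal.span {a}) :
    (↑(Module.annihilator R (extIdeal R I 2)) : Set R) =
      {r : R | ∀ x : FractionRing R,
        x ∈ (1 / (1 / (I : FractionalIdeal (nonZeroDivisors R) (FractionRing R)))) →
          algebraMap R (FractionRing R) r * x ∈
            (I : FractionalIdeal (nonZeroDivisors R) (FractionRing R))} := by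
  obtain ⟨a, b, rfl⟩ := hgen
  have hb : b ≠ 0 := by
    rintro rfl
    exact hmin a (by rw [Set.pair_comm, Ideal.span_insert_zero])
  ext r
  exact ((pairResolution a b).mem_annihilator_ext_succ_iff 1 r).trans
    (forall_exists_comp_eq_smul_iff hb (range_pairResolution_d_two_one a b) r)

/-- In a Noetherian local domain, for an ideal `I` with `μ(I) = 2` and
grade 2, `Ann(Ext²_R(R/I,R)) = (I : I**)`, where `I** = (R : (R : I))` is the reflexive
closure of `I` computed inside the fraction field and viewed inside `R`. -/
theorem stmt15 (R : Type) [CommRing R] [IsNoetherianRing R] [IsLocalRing R] [IsDomain R]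
    (I : Ideal R)
    (hgen : ∃ a b : R, I = Ideal.span {a, b})
    (hmin : ∀ a : R, I ≠ Ideal.span {a})
    (hlt : ∀ i < 2, Subsingleton (extIdeal R I i))
    (hg : Nontrivial (extIdeal R I 2)) :
    (↑(Module.annihilator R (extIdeal R I 2)) : Set R) =
      {r : R | ∀ x : FractionRing R,
        x ∈ (1 / (1 / (I : FractionalIdeal (nonZeroDivisors R) (FractionRing R)))) →
          algebraMap R (FractionRing R) r * x ∈
            (I : FractionalIdeal (nonZeroDivisors R) (FractionRing R))} :=
  stmt15_general R I hgen hmin
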